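/- Let s : ℕ → ℂ be governed by a minimal LRF of order r, i.e. s satisfies an LRF of order r with a_r ≠ 0 and satisfies no LRF of smaller order. Then for every window length L ≥ r, the L-trajectory space of s (the span of all L-lagged vectors X_i = (s_i, …, s_{i+L−1}), i ≥ 0) has dimension exactly r. -/
import Mathlib


/-- A time series `s` satisfies a linear recurrent formula (LRF) of order `t`:
there are coefficients `a 1, …, a t` with `a t ≠ 0` such that
`s (i+t) = ∑_{k=1}^t a k * s (i+t-k)` for all `i ≥ 0`. -/
def SatisfiesLRF (s : ℕ → ℂ) (t : ℕ) : Prop :=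
  ∃ a : ℕ → ℂ, a t ≠ 0 ∧ ∀ i : ℕ, s (i + t) = ∑ k ∈ Finset.Icc 1 t, a k * s (i + t - k)

private lemma icc_eq_insert (r : ℕ) (hr : 1 ≤ r) :
    Finset.Icc 1 r = insert r (Finset.Icc 1 (r - 1)) := by
  ext n; simp only [Finset.mem_Icc, Finset.mem_insert]; omega

/-- Backward extension: if `T` satisfies the forward recurrence induced by an LRF with
`a r ≠ 0` and vanishes from `m` onward, then `T` vanishes everywhere. -/
private lemma backward_zero (r : ℕ) (hr : 1 ≤ r) (a : ℕ → ℂ) (har : a r ≠ 0) (T : ℕ → ℂ)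
    (hT : ∀ q, T (q + r) = ∑ k ∈ Finset.Icc 1 r, a k * T (q + (r - k)))
    (m : ℕ) (h0 : ∀ q, m ≤ q → T q = 0) : ∀ q, T q = 0 := by
  suffices h : ∀ d q, m ≤ q + d → T q = 0 by
    intro q; exact h m q (by omega)
  intro d
  induction d with
  | zero => intro q hq; exact h0 q (by omega)
  | succ d ih =>
    intro q hq
    by_cases hqm : m ≤ q
    · exact h0 q hqm
    · have h1 : T (q + r) = 0 := ih (q + r) (by omega)
      have heq := hT q
      rw [icc_eq_insert r hr, Finset.sum_insert (by simp only [Finset.mem_Icc]; omega)] at heq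
      have h2 : ∀ k ∈ Finset.Icc 1 (r - 1), a k * T (q + (r - k)) = 0 := by
        intro k hk
        simp only [Finset.mem_Icc] at hk
        rw [ih (q + (r - k)) (by omega), mul_zero]
      rw [Finset.sum_eq_zero h2, add_zero, Nat.sub_self, Nat.add_zero, h1] at heq
      exact (mul_eq_zero.mp heq.symm).resolve_left har

/-- If `s` is governed by a minimal LRF of order `r`, then for every
window length `L ≥ r`, the `L`-trajectory space of `s` (the span of all the
`L`-lagged vectors `X_i = (s i, …, s (i+L-1))`) has dimension exactly `r`. -/
theorem minimal_lrf_trajectory_space_finrank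
    (s : ℕ → ℂ) (r : ℕ)
    (hlrf : SatisfiesLRF s r)
    (hmin : ∀ t : ℕ, t < r → ¬ SatisfiesLRF s t)
    (L : ℕ) (hL : r ≤ L) :
    Module.finrank ℂ
      ↥(Submodule.span ℂ (Set.range fun i : ℕ => fun l : Fin L => s (i + (l : ℕ)))) = r := by
  classical
  obtain ⟨a, har, hrec⟩ := hlrf
  rcases Nat.eq_zero_or_pos r with hr0 | hrpos
  · subst hr0
    have hs0 : ∀ i, s i = 0 := fun i => by simpa using hrec i
    have hb : Submodule.span ℂ (Set.range fun i : ℕ => fun l : Fin L => s (i + (l : ℕ))) = ⊥ := by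
      rw [Submodule.span_eq_bot]
      rintro x ⟨i, rfl⟩
      funext l
      exact hs0 _
    rw [hb]
    simp
  · set g : Fin r → (Fin L → ℂ) := fun i l => s ((i : ℕ) + (l : ℕ)) with hg
    -- the span of all lagged vectors equals the span of the first `r` of them
    have key : ∀ i : ℕ, (fun l : Fin L => s (i + (l : ℕ))) ∈ Submodule.span ℂ (Set.range g) := by
      intro i
      induction i using Nat.strong_induction_on with
      | _ i ih =>
        by_cases hi : i < r
        · exact Submodule.subset_span ⟨⟨i, hi⟩, rfl⟩
        · push_neg at hi
          have hfi : (fun l : Fin L => s (i + (l : ℕ)))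
              = ∑ k ∈ Finset.Icc 1 r, a k • (fun l : Fin L => s (i - k + (l : ℕ))) := by
            funext l
            have h1 := hrec (i - r + (l : ℕ))
            have h2 : i - r + (l : ℕ) + r = i + (l : ℕ) := by omega
            rw [h2] at h1
            rw [h1]
            simp only [Finset.sum_apply, Pi.smul_apply, smul_eq_mul]
            apply Finset.sum_congr rfl
            intro k hk
            simp only [Finset.mem_Icc] at hk
            congr 1
            congr 1
            omega
          rw [hfi]
          exact Submodule.sum_mem _ fun k hk => Submodule.smul_mem _ _
            (ih (i - k) (by simp only [Finset.mem_Icc] at hk; omega))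
    have hspan : Submodule.span ℂ (Set.range fun i : ℕ => fun l : Fin L => s (i + (l : ℕ)))
        = Submodule.span ℂ (Set.range g) := by
      apply le_antisymm
      · rw [Submodule.span_le]
        rintro x ⟨i, rfl⟩
        exact key i
      · rw [Submodule.span_le]
        rintro x ⟨i, rfl⟩
        exact Submodule.subset_span ⟨(i : ℕ), rfl⟩
    -- linear independence of the first r lagged vectors
    have hli : LinearIndependent ℂ g := by
      by_contra hdep
      obtain ⟨c, hsum, i0, hi0⟩ := Fintype.not_linearIndependent_iff.mp hdep
      -- c' : ℕ-indexed coefficients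
      set c' : ℕ → ℂ := fun n => if h : n < r then c ⟨n, h⟩ else 0 with hc'
      -- the relation holds for all window positions l < L
      have H0 : ∀ l : ℕ, l < L → ∑ n ∈ Finset.range r, c' n * s (n + l) = 0 := by
        intro l hl
        have := congrFun hsum ⟨l, hl⟩
        simp only [Finset.sum_apply, Pi.smul_apply, smul_eq_mul, Pi.zero_apply] at this
        rw [← this, ← Fin.sum_univ_eq_sum_range (fun n => c' n * s (n + l))]
        apply Finset.sum_congr rfl
        intro k _
        simp only [hc', hg, Fin.is_lt, dif_pos, Fin.eta]
      -- the relation propagates to all shifts l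
      have H : ∀ l : ℕ, ∑ n ∈ Finset.range r, c' n * s (n + l) = 0 := by
        intro l
        induction l using Nat.strong_induction_on with
        | _ l ihl =>
          by_cases hl : l < L
          · exact H0 l hl
          · push_neg at hl
            have hlr : r ≤ l := le_trans hL hl
            have step : ∀ n ∈ Finset.range r,
                c' n * s (n + l) = ∑ k ∈ Finset.Icc 1 r, a k * (c' n * s (n + (l - k))) := by
              intro n _
              have h1 := hrec (n + (l - r))
              have h2 : n + (l - r) + r = n + l := by omega
              rw [h2] at h1
              rw [h1, Finset.mul_sum]
              apply Finset.sum_congr rfl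
              intro k hk
              simp only [Finset.mem_Icc] at hk
              have h3 : n + l - k = n + (l - k) := by omega
              rw [h3]; ring
            calc ∑ n ∈ Finset.range r, c' n * s (n + l)
                = ∑ n ∈ Finset.range r, ∑ k ∈ Finset.Icc 1 r, a k * (c' n * s (n + (l - k))) :=
                  Finset.sum_congr rfl step
              _ = ∑ k ∈ Finset.Icc 1 r, a k * ∑ n ∈ Finset.range r, c' n * s (n + (l - k)) := by
                  rw [Finset.sum_comm]
                  apply Finset.sum_congr rfl
                  intro k _
                  rw [Finset.mul_sum]
              _ = 0 := by
                  apply Finset.sum_eq_zero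
                  intro k hk
                  simp only [Finset.mem_Icc] at hk
                  rw [ihl (l - k) (by omega), mul_zero]
      -- support of c'
      set S : Finset ℕ := (Finset.range r).filter (fun n => c' n ≠ 0) with hS
      have hSne : S.Nonempty := by
        refine ⟨(i0 : ℕ), ?_⟩
        simp only [hS, Finset.mem_filter, Finset.mem_range]
        refine ⟨i0.is_lt, ?_⟩
        simp only [hc', i0.is_lt, dif_pos, Fin.eta]
        exact hi0
      set m : ℕ := S.min' hSne with hm
      set j : ℕ := S.max' hSne with hj
      have hmS : m ∈ S := S.min'_mem hSne
      have hjS : j ∈ S := S.max'_mem hSne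
      have hmle : ∀ n ∈ S, m ≤ n := fun n hn => S.min'_le n hn
      have hjle : ∀ n ∈ S, n ≤ j := fun n hn => S.le_max' n hn
      have hmj : m ≤ j := hmle j hjS
      have hjr : j < r := by
        have := hjS; simp only [hS, Finset.mem_filter, Finset.mem_range] at this; exact this.1
      have hcm : c' m ≠ 0 := by
        have := hmS; simp only [hS, Finset.mem_filter] at this; exact this.2
      have hcj : c' j ≠ 0 := by
        have := hjS; simp only [hS, Finset.mem_filter] at this; exact this.2
      -- restrict the relation to the support
      have HS : ∀ l : ℕ, ∑ n ∈ S, c' n * s (n + l) = 0 := by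
        intro l
        rw [← H l]
        apply Finset.sum_subset (Finset.filter_subset _ _)
        intro n hn hns
        simp only [hS, Finset.mem_filter, hn, true_and, not_not] at hns
        rw [hns, zero_mul]
      -- the shifted relation, extended backwards
      set T : ℕ → ℂ := fun q => ∑ n ∈ S, c' n * s (n - m + q) with hT
      have hTfwd : ∀ q, T (q + r) = ∑ k ∈ Finset.Icc 1 r, a k * T (q + (r - k)) := by
        intro q
        simp only [hT]
        have step : ∀ n ∈ S,
            c' n * s (n - m + (q + r)) = ∑ k ∈ Finset.Icc 1 r, a k * (c' n * s (n - m + (q + (r - k)))) := by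
          intro n hn
          have h1 := hrec (n - m + q)
          have h2 : n - m + q + r = n - m + (q + r) := by omega
          rw [h2] at h1
          rw [h1, Finset.mul_sum]
          apply Finset.sum_congr rfl
          intro k hk
          simp only [Finset.mem_Icc] at hk
          have h3 : n - m + (q + r) - k = n - m + (q + (r - k)) := by omega
          rw [h3]; ring
        rw [Finset.sum_congr rfl step, Finset.sum_comm]
        apply Finset.sum_congr rfl
        intro k _
        rw [Finset.mul_sum]
      have hTge : ∀ q, m ≤ q → T q = 0 := by
        intro q hq
        simp only [hT]
        rw [← HS (q - m)]
        apply Finset.sum_congr rfl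
        intro n hn
        have := hmle n hn
        congr 2
        omega
      have hT0 : ∀ q, T q = 0 := backward_zero r hrpos a har T hTfwd m hTge
      -- derive an LRF of order t = j - m < r
      set t : ℕ := j - m with ht
      have htr : t < r := by omega
      apply hmin t htr
      by_cases ht0 : t = 0
      · -- all of S is {m}, so s vanishes identically
        have hjm : j = m := by omega
        have hSm : S = {m} := by
          apply Finset.eq_singleton_iff_unique_mem.mpr
          exact ⟨hmS, fun n hn => by have := hmle n hn; have := hjle n hn; omega⟩
        have hs0 : ∀ q, s q = 0 := by
          intro q
          have := hT0 q
          simp only [hT, hSm, Finset.sum_singleton, Nat.sub_self, Nat.zero_add] at this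
          exact (mul_eq_zero.mp this).resolve_left hcm
        refine ⟨fun _ => 1, one_ne_zero, fun i => ?_⟩
        rw [ht0]
        simp [hs0]
      · -- nontrivial derived LRF
        refine ⟨fun k => -(c' (j - k)) / c' j, ?_, ?_⟩
        · show -c' (j - t) / c' j ≠ 0
          have hjtm : j - t = m := by omega
          rw [hjtm]
          exact div_ne_zero (neg_ne_zero.mpr hcm) hcj
        · intro i
          have h0 := hT0 i
          have hjt : j - m + i = i + t := by omega
          simp only [hT] at h0
          rw [← Finset.add_sum_erase _ _ hjS, hjt] at h0
          have hsub : S.erase j ⊆ Finset.Icc m (j - 1) := by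
            intro n hn
            rw [Finset.mem_erase] at hn
            have h1 := hmle n hn.2
            have h2 := hjle n hn.2
            simp only [Finset.mem_Icc]
            omega
          have e1 : ∑ k ∈ Finset.Icc 1 t, -c' (j - k) / c' j * s (i + t - k)
              = ∑ n ∈ Finset.Icc m (j - 1), -c' n / c' j * s (n - m + i) := by
            refine Finset.sum_bij' (fun k _ => j - k) (fun n _ => j - n) ?_ ?_ ?_ ?_ ?_
            · intro k hk
              simp only [Finset.mem_Icc] at hk ⊢
              omega
            · intro n hn
              simp only [Finset.mem_Icc] at hn ⊢
              omega
            · intro k hk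
              simp only [Finset.mem_Icc] at hk
              beta_reduce
              omega
            · intro n hn
              simp only [Finset.mem_Icc] at hn
              beta_reduce
              omega
            · intro k hk
              simp only [Finset.mem_Icc] at hk
              beta_reduce
              congr 2
              omega
          have e2 : ∑ n ∈ Finset.Icc m (j - 1), -c' n / c' j * s (n - m + i)
              = ∑ n ∈ S.erase j, -c' n / c' j * s (n - m + i) := by
            refine (Finset.sum_subset hsub ?_).symm
            intro n hn hns
            simp only [Finset.mem_Icc] at hn
            have hnj : n ≠ j := by omega
            have hc0 : c' n = 0 := by
              by_contra hc
              exact hns (Finset.mem_erase.mpr ⟨hnj,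
                Finset.mem_filter.mpr ⟨Finset.mem_range.mpr (by omega), hc⟩⟩)
            rw [hc0]
            simp
          rw [e1, e2]
          have e3 : ∑ n ∈ S.erase j, -c' n / c' j * s (n - m + i)
              = (-(∑ n ∈ S.erase j, c' n * s (n - m + i))) / c' j := by
            rw [← Finset.sum_neg_distrib, Finset.sum_div]
            apply Finset.sum_congr rfl
            intro n _
            ring
          rw [e3]
          have e4 : -(∑ n ∈ S.erase j, c' n * s (n - m + i)) = c' j * s (i + t) := by
            linear_combination -h0
          rw [e4, mul_div_cancel_left₀ _ hcj]
    rw [hspan, finrank_span_eq_card hli, Fintype.card_fin]
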